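/- Value dominance of max⁺-aggregation: the max⁺-aggregation policy π⊕ satisfies V^{π⊕}_t(s) ≥ f⁺_t(s) = max_{k∈[K]} V^{π^k}_t(s) for every 0 ≤ t ≤ H and every s ∈ S. -/

import Mathlib

open scoped BigOperators

/-- Expectation of a real-valued function under a probability mass function on a finite type. -/
noncomputable def pexp {α : Type*} [Fintype α] (p : PMF α) (f : α → ℝ) : ℝ :=
  ∑ a, (p a).toReal * f a

/-!
Backward induction on `t`. At `t = H` both sides vanish. For `t < H`, each `V^{π^k}_t(s)` is an
average over actions of `r(s,a) + E[V^{π^k}_{t+1}] ≤ r(s,a) + E[f⁺_{t+1}]`, and the greedy action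
`a*(t,s)` maximizes the right-hand side, so `V^{π^k}_t(s) ≤ r(s,a*) + E[f⁺_{t+1}]`, which is at most
`r(s,a*) + E[V^{π⊕}_{t+1}] = V^{π⊕}_t(s)` by the induction hypothesis. Taking the max over `k`
gives the claim.
-/

section pexp

variable {α : Type*} [Fintype α]

lemma PMF.sum_toReal_eq_one (p : PMF α) : ∑ a, (p a).toReal = 1 := by
  have h := p.tsum_coe
  rw [tsum_fintype] at h
  rw [← ENNReal.toReal_sum fun a _ => p.apply_ne_top a, h, ENNReal.toReal_one]

lemma pexp_mono (p : PMF α) {f g : α → ℝ} (h : f ≤ g) : pexp p f ≤ pexp p g :=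
  Finset.sum_le_sum fun a _ => mul_le_mul_of_nonneg_left (h a) ENNReal.toReal_nonneg

lemma pexp_const (p : PMF α) (c : ℝ) : pexp p (fun _ => c) = c := by
  rw [pexp, ← Finset.sum_mul, p.sum_toReal_eq_one, one_mul]

lemma pexp_le_of_forall_le (p : PMF α) {f : α → ℝ} {c : ℝ} (h : ∀ a, f a ≤ c) :
    pexp p f ≤ c :=
  pexp_const p c ▸ pexp_mono p h

lemma pexp_pure (a : α) (f : α → ℝ) : pexp (PMF.pure a) f = f a := by
  classical
  rw [pexp, Finset.sum_eq_single a (fun b _ hb => by simp [PMF.pure_apply, hb]) (by simp)]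
  simp

end pexp

lemma pexp_backup_le_greedy_backup {S A : Type*} [Fintype S] [Fintype A]
    (P : S → A → PMF S) (r : S → A → ℝ) (π : PMF A) (s : S) {g f : S → ℝ} (hgf : g ≤ f)
    (a' : A) (ha' : ∀ a, r s a + pexp (P s a) f ≤ r s a' + pexp (P s a') f) :
    pexp π (fun a => r s a + pexp (P s a) g) ≤ r s a' + pexp (P s a') f :=
  pexp_le_of_forall_le π fun a => (add_le_add_right (pexp_mono _ hgf) _).trans (ha' a)

theorem maxplus_aggregation_value_dominance_general
    {S A : Type*} [Fintype S] [Fintype A]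
    (P : S → A → PMF S) (r : S → A → ℝ)
    (H : ℕ)
    (K : ℕ) (hK : 1 ≤ K)
    (πs : Fin K → ℕ → S → PMF A)
    (Vs : Fin K → ℕ → S → ℝ)
    (hVsH : ∀ k s, Vs k H s = 0)
    (hVs : ∀ k t, t < H → ∀ s,
      Vs k t s = pexp (πs k t s) (fun a => r s a + pexp (P s a) (Vs k (t + 1))))
    (fplus : ℕ → S → ℝ)
    (hfplus : ∀ t s, fplus t s = ⨆ k : Fin K, Vs k t s)
    (astar : ℕ → S → A)
    (hastar : ∀ t s a,
      r s a + pexp (P s a) (fplus (t + 1)) - fplus t s ≤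
        r s (astar t s) + pexp (P s (astar t s)) (fplus (t + 1)) - fplus t s)
    (Vagg : ℕ → S → ℝ)
    (hVaggH : ∀ s, Vagg H s = 0)
    (hVagg : ∀ t, t < H → ∀ s,
      Vagg t s = pexp (PMF.pure (astar t s))
        (fun a => r s a + pexp (P s a) (Vagg (t + 1)))) :
    ∀ t, t ≤ H → ∀ s, fplus t s ≤ Vagg t s := by
  have : Nonempty (Fin K) := ⟨⟨0, hK⟩⟩
  have hVs_le : ∀ k t, Vs k t ≤ fplus t := fun k t s =>
    hfplus t s ▸ le_ciSup (Finite.bddAbove_range fun k => Vs k t s) k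
  intro t ht
  induction ht using Nat.decreasingInduction with
  | self =>
    intro s
    rw [hfplus, hVaggH]
    exact ciSup_le fun k => (hVsH k s).le
  | of_succ t htH ih =>
    intro s
    rw [hfplus, hVagg t htH s, pexp_pure]
    refine ciSup_le fun k => ?_
    calc Vs k t s
        ≤ r s (astar t s) + pexp (P s (astar t s)) (fplus (t + 1)) :=
          hVs k t htH s ▸ pexp_backup_le_greedy_backup P r _ s (hVs_le k (t + 1)) _
            fun a => sub_le_sub_iff_right _ |>.mp (hastar t s a)
      _ ≤ r s (astar t s) + pexp (P s (astar t s)) (Vagg (t + 1)) :=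
          add_le_add_right (pexp_mono _ ih) _

/-- Value dominance of max⁺-aggregation: the max⁺-aggregation policy `π⊕` satisfies
`V^{π⊕}_t(s) ≥ f⁺_t(s) = max_{k∈[K]} V^{π^k}_t(s)` for every `0 ≤ t ≤ H` and every state `s`. -/
theorem maxplus_aggregation_value_dominance
    {S A : Type*} [Fintype S] [Nonempty S] [Fintype A] [Nonempty A]
    (P : S → A → PMF S) (r : S → A → ℝ)
    (hr : ∀ s a, 0 ≤ r s a ∧ r s a ≤ 1)
    (H : ℕ)
    (K : ℕ) (hK : 1 ≤ K)
    (πs : Fin K → ℕ → S → PMF A)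
    (Vs : Fin K → ℕ → S → ℝ)
    (hVsH : ∀ k s, Vs k H s = 0)
    (hVs : ∀ k t, t < H → ∀ s,
      Vs k t s = pexp (πs k t s) (fun a => r s a + pexp (P s a) (Vs k (t + 1))))
    (fplus : ℕ → S → ℝ)
    (hfplus : ∀ t s, fplus t s = ⨆ k : Fin K, Vs k t s)
    (astar : ℕ → S → A)
    (hastar : ∀ t s a,
      r s a + pexp (P s a) (fplus (t + 1)) - fplus t s ≤
        r s (astar t s) + pexp (P s (astar t s)) (fplus (t + 1)) - fplus t s)
    (Vagg : ℕ → S → ℝ)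
    (hVaggH : ∀ s, Vagg H s = 0)
    (hVagg : ∀ t, t < H → ∀ s,
      Vagg t s = pexp (PMF.pure (astar t s))
        (fun a => r s a + pexp (P s a) (Vagg (t + 1)))) :
    ∀ t, t ≤ H → ∀ s, fplus t s ≤ Vagg t s :=
  maxplus_aggregation_value_dominance_general P r H K hK πs Vs hVsH hVs fplus hfplus astar hastar
    Vagg hVaggH hVagg
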